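/- Let M ≥ 1, fix m ∈ {1, …, 2M}, and let d₁, d₂ > 0. Let X_1, …, X_{2M} and (Y_i)_{i ∈ {1,…,2M}\{m}} be mutually independent exponentially distributed random variables with arbitrary positive rates. Define P(ρ) = E[ Σ_{∅ ≠ A ⊆ {1,…,2M}\{m}} Q(√( 2d₁ρ X_m + (d₂ρ/M) Σ_{i∈A} Y_i )) · Π_{j ∈ ({1,…,2M}\{m}) \ A} Q(√(2d₁ρ X_j)) · Π_{i∈A} (1 − Q(√(2d₁ρ X_i))) + Π_{j=1}^{2M} Q(√(2d₁ρ X_j)) ]. Then lim_{ρ→∞} (log P(ρ)) / (log ρ) = −2M; that is, under the multiuser CSA protocol every secondary user enjoys diversity order 2M in decoding the beacon message. -/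

import Mathlib

open MeasureTheory ProbabilityTheory Real Filter

noncomputable def gaussQ (x : ℝ) : ℝ :=
  ∫ t in Set.Ioi x, (Real.sqrt (2 * Real.pi))⁻¹ * Real.exp (-t ^ 2 / 2)

lemma gdens_eq (t : ℝ) : (Real.sqrt (2 * Real.pi))⁻¹ * Real.exp (-t ^ 2 / 2)
    = (Real.sqrt (2 * Real.pi))⁻¹ * Real.exp (-(1/2) * t ^ 2) := by ring_nf

lemma gdens_integrable :
    MeasureTheory.Integrable (fun t : ℝ => (Real.sqrt (2 * Real.pi))⁻¹ * Real.exp (-t ^ 2 / 2)) := by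
  simp_rw [gdens_eq]
  exact (integrable_exp_neg_mul_sq (by norm_num : (0:ℝ) < 1/2)).const_mul _

lemma gdens_pos (t : ℝ) : 0 < (Real.sqrt (2 * Real.pi))⁻¹ * Real.exp (-t ^ 2 / 2) :=
  mul_pos (inv_pos.2 (Real.sqrt_pos.2 (by positivity))) (Real.exp_pos _)

lemma gdens_integral : ∫ t : ℝ, (Real.sqrt (2 * Real.pi))⁻¹ * Real.exp (-t ^ 2 / 2) = 1 := by
  simp_rw [gdens_eq]
  rw [MeasureTheory.integral_const_mul, integral_gaussian]
  rw [show Real.pi / (1/2) = 2 * Real.pi by ring]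
  rw [inv_mul_cancel₀ (ne_of_gt (Real.sqrt_pos.2 (by positivity)))]

lemma gaussQ_pos (x : ℝ) : 0 < gaussQ x := by
  rw [gaussQ, MeasureTheory.setIntegral_pos_iff_support_of_nonneg_ae
    (ae_of_all _ fun t => (gdens_pos t).le) gdens_integrable.integrableOn]
  have : Function.support (fun t : ℝ => (Real.sqrt (2 * Real.pi))⁻¹ * Real.exp (-t ^ 2 / 2))
      = Set.univ := Set.eq_univ_of_forall fun t => (gdens_pos t).ne'
  rw [this, Set.univ_inter]
  simp [Real.volume_Ioi]

lemma gaussQ_nonneg (x : ℝ) : 0 ≤ gaussQ x := (gaussQ_pos x).le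

lemma gaussQ_le_one (x : ℝ) : gaussQ x ≤ 1 := by
  rw [gaussQ, ← gdens_integral]
  exact MeasureTheory.setIntegral_le_integral gdens_integrable
    (ae_of_all _ fun t => (gdens_pos t).le)

lemma gaussQ_antitone : Antitone gaussQ := by
  intro x y hxy
  exact MeasureTheory.setIntegral_mono_set gdens_integrable.integrableOn
    (ae_of_all _ fun t => (gdens_pos t).le)
    (HasSubset.Subset.eventuallyLE (Set.Ioi_subset_Ioi hxy))

lemma gaussQ_measurable : Measurable gaussQ := gaussQ_antitone.measurable

lemma gaussQ_le_exp {x : ℝ} (hx : 0 ≤ x) : gaussQ x ≤ Real.exp (-x ^ 2 / 2) := by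
  have key : ∫ t in Set.Ioi x,
      (Real.sqrt (2 * Real.pi))⁻¹ * Real.exp (-(t - x) ^ 2 / 2) = gaussQ 0 := by
    rw [gaussQ]
    have hmp : MeasurePreserving (fun u : ℝ => u + x) := measurePreserving_add_right volume x
    have hme : MeasurableEmbedding (fun u : ℝ => u + x) :=
      (Homeomorph.addRight x).measurableEmbedding
    have := hmp.setIntegral_preimage_emb hme
      (fun t => (Real.sqrt (2 * Real.pi))⁻¹ * Real.exp (-(t - x) ^ 2 / 2)) (Set.Ioi x)
    rw [← this]
    have hpre : (fun u : ℝ => u + x) ⁻¹' Set.Ioi x = Set.Ioi 0 := by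
      ext u; simp [lt_add_iff_pos_left]
    rw [hpre]
    congr 1
    ext u
    simp
  have h1 : gaussQ x ≤ Real.exp (-x ^ 2 / 2) * ∫ t in Set.Ioi x,
      (Real.sqrt (2 * Real.pi))⁻¹ * Real.exp (-(t - x) ^ 2 / 2) := by
    rw [gaussQ, ← MeasureTheory.integral_const_mul]
    apply MeasureTheory.setIntegral_mono_on
    · exact gdens_integrable.integrableOn
    · apply MeasureTheory.Integrable.integrableOn
      apply MeasureTheory.Integrable.const_mul
      have : (fun t : ℝ => (Real.sqrt (2 * Real.pi))⁻¹ * Real.exp (-(t - x) ^ 2 / 2))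
          = (fun t : ℝ => (Real.sqrt (2 * Real.pi))⁻¹ * Real.exp (-t ^ 2 / 2)) ∘ (fun t => t - x) := by
        ext t; rfl
      rw [this]
      exact (gdens_integrable.comp_sub_right x)
    · exact measurableSet_Ioi
    · intro t ht
      rw [show Real.exp (-x ^ 2 / 2) * ((Real.sqrt (2 * Real.pi))⁻¹ * Real.exp (-(t - x) ^ 2 / 2))
          = (Real.sqrt (2 * Real.pi))⁻¹ * (Real.exp (-x ^ 2 / 2) * Real.exp (-(t - x) ^ 2 / 2)) by ring]
      apply mul_le_mul_of_nonneg_left _ (by positivity)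
      rw [← Real.exp_add]
      apply Real.exp_le_exp.2
      have ht' : x ≤ t := le_of_lt ht
      nlinarith [mul_nonneg hx (sub_nonneg.2 ht')]
  calc gaussQ x ≤ Real.exp (-x ^ 2 / 2) * gaussQ 0 := by rw [← key]; exact h1
    _ ≤ Real.exp (-x ^ 2 / 2) * 1 := by
        exact mul_le_mul_of_nonneg_left (gaussQ_le_one 0) (Real.exp_pos _).le
    _ = Real.exp (-x ^ 2 / 2) := mul_one _

-- integrability of bounded measurable functions on a finite measure space
lemma int_of_bd {Ω : Type*} [MeasurableSpace Ω] {P : Measure Ω} [IsFiniteMeasure P]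
    {g : Ω → ℝ} (hm : AEStronglyMeasurable g P) {C : ℝ} (h : ∀ ω, |g ω| ≤ C) :
    Integrable g P :=
  (integrable_const C).mono' hm (ae_of_all _ fun ω => by simpa [Real.norm_eq_abs] using h ω)

-- factorization of integrals of products of functions of independent random variables
lemma indep_integral_prod {ι : Type*} {Ω : Type*} [MeasurableSpace Ω] {P : Measure Ω}
    [IsProbabilityMeasure P] {Z : ι → Ω → ℝ}
    (hindep : iIndepFun Z P) (hZ : ∀ i, Measurable (Z i))
    (f : ι → ℝ → ℝ) (hf : ∀ i, Measurable (f i)) (hbd : ∀ i x, |f i x| ≤ 1) (s : Finset ι) :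
    ∫ ω, ∏ i ∈ s, f i (Z i ω) ∂P = ∏ i ∈ s, ∫ ω, f i (Z i ω) ∂P := by
  classical
  have hg : iIndepFun (fun i => f i ∘ Z i) P :=
    hindep.comp f hf
  have hgm : ∀ i, Measurable (f i ∘ Z i) := fun i => (hf i).comp (hZ i)
  induction s using Finset.induction_on with
  | empty => simp
  | insert _ _ hi ih =>
    rename_i i s
    have hre : (fun ω => ∏ j ∈ insert i s, f j (Z j ω))
        = fun ω => f i (Z i ω) * ∏ j ∈ s, f j (Z j ω) := by
      ext ω; rw [Finset.prod_insert hi]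
    have hprodm : Measurable (fun ω => ∏ j ∈ s, f j (Z j ω)) := by
      apply Finset.measurable_prod
      exact fun j _ => hgm j
    have hprodbd : ∀ ω, |∏ j ∈ s, f j (Z j ω)| ≤ 1 := by
      intro ω
      rw [Finset.abs_prod]
      apply Finset.prod_le_one (fun j _ => abs_nonneg _) (fun j _ => hbd j _)
    have hint1 : Integrable (fun ω => f i (Z i ω)) P :=
      int_of_bd (hgm i).aestronglyMeasurable (fun ω => hbd i _)
    have hint2 : Integrable (fun ω => ∏ j ∈ s, f j (Z j ω)) P :=
      int_of_bd hprodm.aestronglyMeasurable hprodbd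
    have hIF : IndepFun (fun ω => f i (Z i ω)) (fun ω => ∏ j ∈ s, f j (Z j ω)) P := by
      have := (hg.indepFun_finset_prod_of_notMem hgm hi).symm
      have heq : (∏ j ∈ s, (f j ∘ Z j)) = fun ω => ∏ j ∈ s, f j (Z j ω) := by
        ext ω; simp [Finset.prod_apply]
      rwa [heq] at this
    classical
    have hmul := hIF.integral_mul_eq_mul_integral hint1.aestronglyMeasurable hint2.aestronglyMeasurable
    rw [hre]
    exact hmul.trans (by rw [Finset.prod_insert hi, ih])

-- measure of Iic under expMeasure
lemma expMeasure_Iic_toReal {r b : ℝ} (hr : 0 < r) (hb : 0 ≤ b) :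
    (expMeasure r (Set.Iic b)).toReal = 1 - Real.exp (-(r * b)) := by
  haveI := isProbabilityMeasure_expMeasure hr
  have h := ProbabilityTheory.cdf_expMeasure_eq hr b
  rw [cdf_eq_real, measureReal_def] at h
  rw [h, if_pos hb]

lemma expMeasure_Ioc_toReal {r b : ℝ} (hr : 0 < r) (hb : 0 ≤ b) :
    (expMeasure r (Set.Ioc 0 b)).toReal = 1 - Real.exp (-(r * b)) := by
  haveI := isProbabilityMeasure_expMeasure hr
  have h0 : expMeasure r (Set.Iic 0) = 0 := by
    have := expMeasure_Iic_toReal hr (le_refl 0)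
    simp only [mul_zero, neg_zero, Real.exp_zero, sub_self] at this
    exact (ENNReal.toReal_eq_zero_iff _).1 this |>.resolve_right (measure_ne_top _ _)
  have hset : Set.Ioc 0 b = Set.Iic b \ Set.Iic 0 := by
    ext x; simp [Set.mem_Ioc, Set.mem_diff, and_comm]
  rw [hset, measure_diff (Set.Iic_subset_Iic.2 hb) measurableSet_Iic.nullMeasurableSet
    (measure_ne_top _ _), h0, tsub_zero, expMeasure_Iic_toReal hr hb]

-- upper bound for ∫ exp(-(c * max x 0)) under exponential measure
lemma exp_factor_upper {r c b : ℝ} (hr : 0 < r) (hc : 0 < c) (hb : 0 ≤ b) :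
    ∫ x, Real.exp (-(c * max x 0)) ∂(expMeasure r) ≤ r * b + Real.exp (-(c * b)) := by
  haveI := isProbabilityMeasure_expMeasure hr
  have hmeas : Measurable fun x : ℝ => Real.exp (-(c * max x 0)) := by
    exact (measurable_id.max measurable_const).const_mul c |>.neg.exp
  have hptwise : ∀ x : ℝ, Real.exp (-(c * max x 0)) ≤
      Set.indicator (Set.Iic b) (fun _ => (1:ℝ)) x + Real.exp (-(c * b)) := by
    intro x
    by_cases hx : x ≤ b
    · have h1 : Real.exp (-(c * max x 0)) ≤ 1 := by
        rw [Real.exp_le_one_iff]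
        have : 0 ≤ c * max x 0 := mul_nonneg hc.le (le_max_right _ _)
        linarith
      rw [Set.indicator_of_mem (Set.mem_Iic.2 hx)]
      have := (Real.exp_pos (-(c * b))).le
      linarith
    · push_neg at hx
      rw [Set.indicator_of_notMem (by simpa using hx.not_ge)]
      have : c * b ≤ c * max x 0 :=
        mul_le_mul_of_nonneg_left (le_max_of_le_left hx.le) hc.le
      simpa using Real.exp_le_exp.2 (by linarith)
  have hint1 : Integrable (fun x : ℝ => Real.exp (-(c * max x 0))) (expMeasure r) :=
    int_of_bd hmeas.aestronglyMeasurable (C := 1) (fun x => by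
      rw [abs_of_pos (Real.exp_pos _), Real.exp_le_one_iff]
      have : 0 ≤ c * max x 0 := mul_nonneg hc.le (le_max_right _ _)
      linarith)
  have hint2 : Integrable (fun x : ℝ =>
      Set.indicator (Set.Iic b) (fun _ => (1:ℝ)) x + Real.exp (-(c * b))) (expMeasure r) := by
    apply Integrable.add _ (integrable_const _)
    exact (integrable_const (1:ℝ)).indicator measurableSet_Iic
  calc ∫ x, Real.exp (-(c * max x 0)) ∂(expMeasure r)
      ≤ ∫ x, (Set.indicator (Set.Iic b) (fun _ => (1:ℝ)) x + Real.exp (-(c * b))) ∂(expMeasure r) :=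
        integral_mono hint1 hint2 hptwise
    _ = (expMeasure r (Set.Iic b)).toReal + Real.exp (-(c * b)) := by
        rw [integral_add ((integrable_const (1:ℝ)).indicator measurableSet_Iic)
          (integrable_const _), integral_indicator_const _ measurableSet_Iic,
          integral_const]
        simp [measure_univ, measureReal_def]
    _ ≤ r * b + Real.exp (-(c * b)) := by
        rw [expMeasure_Iic_toReal hr hb]
        have := Real.add_one_le_exp (-(r*b))
        have h2 : 1 - Real.exp (-(r * b)) ≤ r * b := by linarith
        linarith

-- lower bound under the exponential measure
lemma exp_factor_lower {r : ℝ} (hr : 0 < r) {f : ℝ → ℝ} (hf : Measurable f)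
    (h0 : ∀ x, 0 ≤ f x) (h1 : ∀ x, f x ≤ 1) {q b : ℝ} (hq : 0 ≤ q) (hb : 0 < b)
    (hfq : ∀ x ∈ Set.Ioc (0:ℝ) b, q ≤ f x) :
    q * (1 - Real.exp (-(r * b))) ≤ ∫ x, f x ∂(expMeasure r) := by
  haveI := isProbabilityMeasure_expMeasure hr
  have hint : Integrable f (expMeasure r) :=
    int_of_bd hf.aestronglyMeasurable (C := 1) (fun x => abs_le.2 ⟨by linarith [h0 x], h1 x⟩)
  calc q * (1 - Real.exp (-(r * b)))
      = ∫ _ in Set.Ioc (0:ℝ) b, q ∂(expMeasure r) := by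
        rw [setIntegral_const, measureReal_def, expMeasure_Ioc_toReal hr hb.le, smul_eq_mul, mul_comm]
    _ ≤ ∫ x in Set.Ioc (0:ℝ) b, f x ∂(expMeasure r) := by
        apply setIntegral_mono_on (integrableOn_const)
          hint.integrableOn measurableSet_Ioc hfq
    _ ≤ ∫ x, f x ∂(expMeasure r) :=
        setIntegral_le_integral hint (ae_of_all _ h0)

lemma squeeze_log {I : ℝ → ℝ} {n : ℕ} {c₁ c₂ K : ℝ} (hc₁ : 0 < c₁) (hc₂ : 0 < c₂) (hK : 0 < K)
    (hlow : ∀ᶠ ρ in atTop, c₁ * (ρ⁻¹) ^ n ≤ I ρ)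
    (hup : ∀ᶠ ρ in atTop, I ρ ≤ c₂ * (K * Real.log ρ / ρ) ^ n) :
    Tendsto (fun ρ => Real.log (I ρ) / Real.log ρ) atTop (nhds (-(n : ℝ))) := by
  have hloglog : Tendsto (fun ρ => Real.log (Real.log ρ) / Real.log ρ) atTop (nhds 0) :=
    (Real.isLittleO_log_id_atTop.tendsto_div_nhds_zero).comp Real.tendsto_log_atTop
  have hconst : ∀ a : ℝ, Tendsto (fun ρ => a / Real.log ρ) atTop (nhds 0) := fun a =>
    tendsto_const_nhds.div_atTop Real.tendsto_log_atTop
  have hgl : Tendsto (fun ρ => Real.log c₁ / Real.log ρ - (n : ℝ)) atTop (nhds (-(n : ℝ))) := by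
    have := (hconst (Real.log c₁)).sub_const (n : ℝ)
    simpa using this
  have hgu : Tendsto (fun ρ => (Real.log c₂ + n * Real.log K) / Real.log ρ
      + (n : ℝ) * (Real.log (Real.log ρ) / Real.log ρ) - (n : ℝ)) atTop (nhds (-(n : ℝ))) := by
    have := ((hconst (Real.log c₂ + n * Real.log K)).add
      (hloglog.const_mul (n : ℝ))).sub_const (n : ℝ)
    simpa using this
  apply tendsto_of_tendsto_of_tendsto_of_le_of_le' hgl hgu
  · filter_upwards [hlow, eventually_gt_atTop (1 : ℝ)] with ρ hlo hρ1
    have hρ0 : (0 : ℝ) < ρ := lt_trans one_pos hρ1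
    have hL : 0 < Real.log ρ := Real.log_pos hρ1
    have hlpos : 0 < c₁ * (ρ⁻¹) ^ n := by positivity
    have hmono : Real.log (c₁ * (ρ⁻¹) ^ n) ≤ Real.log (I ρ) :=
      (Real.log_le_log_iff hlpos (lt_of_lt_of_le hlpos hlo)).2 hlo
    have hcalc : Real.log (c₁ * (ρ⁻¹) ^ n) = Real.log c₁ - n * Real.log ρ := by
      rw [Real.log_mul hc₁.ne' (by positivity), Real.log_pow, Real.log_inv]; ring
    rw [hcalc] at hmono
    have h1 : (Real.log c₁ - n * Real.log ρ) / Real.log ρ ≤ Real.log (I ρ) / Real.log ρ := by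
      gcongr
    calc Real.log c₁ / Real.log ρ - (n : ℝ)
        = (Real.log c₁ - n * Real.log ρ) / Real.log ρ := by
          rw [sub_div, mul_div_assoc, div_self hL.ne', mul_one]
      _ ≤ Real.log (I ρ) / Real.log ρ := h1
  · filter_upwards [hlow, hup, eventually_ge_atTop (Real.exp 1)] with ρ hlo hu hρe
    have hρ1 : (1 : ℝ) < ρ := lt_of_lt_of_le (by
      have := Real.exp_one_gt_d9; linarith) hρe
    have hρ0 : (0 : ℝ) < ρ := lt_trans one_pos hρ1
    have hL : 0 < Real.log ρ := Real.log_pos hρ1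
    have hIpos : 0 < I ρ := lt_of_lt_of_le (by positivity) hlo
    have hupos : (0 : ℝ) < K * Real.log ρ / ρ := by positivity
    have hmono : Real.log (I ρ) ≤ Real.log (c₂ * (K * Real.log ρ / ρ) ^ n) :=
      (Real.log_le_log_iff hIpos (lt_of_lt_of_le hIpos hu)).2 hu
    have hcalc : Real.log (c₂ * (K * Real.log ρ / ρ) ^ n)
        = Real.log c₂ + n * Real.log K + n * Real.log (Real.log ρ) - n * Real.log ρ := by
      rw [Real.log_mul hc₂.ne' (by positivity), Real.log_pow,
        Real.log_div (by positivity) hρ0.ne', Real.log_mul hK.ne' hL.ne']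
      ring
    rw [hcalc] at hmono
    have h1 : Real.log (I ρ) / Real.log ρ ≤
        (Real.log c₂ + n * Real.log K + n * Real.log (Real.log ρ) - n * Real.log ρ)
          / Real.log ρ := by gcongr
    calc Real.log (I ρ) / Real.log ρ ≤ _ := h1
      _ = (Real.log c₂ + n * Real.log K) / Real.log ρ
          + (n : ℝ) * (Real.log (Real.log ρ) / Real.log ρ) - (n : ℝ) := by
          field_simp

lemma gaussQ_sqrt_mul_le {d ρ x : ℝ} (hd : 0 < d) (hρ : 0 < ρ) :
    gaussQ (Real.sqrt (2 * d * ρ * x)) ≤ Real.exp (-(d * ρ * max x 0)) := by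
  rcases le_or_gt x 0 with hx | hx
  · have harg : 2 * d * ρ * x ≤ 0 := mul_nonpos_of_nonneg_of_nonpos (by positivity) hx
    rw [Real.sqrt_eq_zero'.2 harg, max_eq_right hx]
    calc gaussQ 0 ≤ 1 := gaussQ_le_one 0
      _ = Real.exp (-(d * ρ * 0)) := by simp
  · have hnn : 0 ≤ 2 * d * ρ * x := by positivity
    calc gaussQ (Real.sqrt (2 * d * ρ * x))
        ≤ Real.exp (-Real.sqrt (2 * d * ρ * x) ^ 2 / 2) :=
          gaussQ_le_exp (Real.sqrt_nonneg _)
      _ = Real.exp (-(d * ρ * max x 0)) := by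
          rw [Real.sq_sqrt hnn, max_eq_left hx.le]
          congr 1
          ring

lemma meas_exp_neg_mul_max (c : ℝ) : Measurable fun x : ℝ => Real.exp (-(c * max x 0)) :=
  Real.measurable_exp.comp ((measurable_id.max measurable_const).const_mul c).neg

lemma exp_neg_mul_max_le_one {c x : ℝ} (hc : 0 ≤ c) : Real.exp (-(c * max x 0)) ≤ 1 := by
  rw [Real.exp_le_one_iff]
  have : 0 ≤ c * max x 0 := mul_nonneg hc (le_max_right _ _)
  linarith

lemma expMeasure_Iio_zero (r : ℝ) : expMeasure r (Set.Iio 0) = 0 := by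
  rw [expMeasure, gammaMeasure, withDensity_apply _ measurableSet_Iio]
  exact lintegral_gammaPDF_of_nonpos (le_refl 0)
set_option maxHeartbeats 2000000 in
/-- Multiuser CSA protocol: in a network with `2M` secondary users, fix a user
`m`, and let `X_1, …, X_{2M}` (primary-to-user channel gains) together with
`(Y_i)_{i ≠ m}` (user-`i`-to-user-`m` channel gains) be mutually independent
exponentially distributed random variables with arbitrary positive rates.
The beacon-missing probability
`P(ρ) = E[ ∑_{∅ ≠ A ⊆ {1,…,2M}\{m}} Q(√(2d₁ρ X_m + (d₂ρ/M) ∑_{i∈A} Y_i))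
           · ∏_{j ∉ A, j ≠ m} Q(√(2d₁ρ X_j)) · ∏_{i∈A} (1 − Q(√(2d₁ρ X_i)))
         + ∏_{j=1}^{2M} Q(√(2d₁ρ X_j)) ]`
satisfies `lim_{ρ→∞} (log P(ρ))/(log ρ) = −2M`: every secondary user enjoys
diversity order `2M` in decoding the beacon message. -/
theorem multiuser_csa_diversity (M : ℕ) (hM : 1 ≤ M) (m : Fin (2 * M))
    (d₁ d₂ : ℝ) (hd₁ : 0 < d₁) (hd₂ : 0 < d₂)
    {Ω : Type*} [MeasurableSpace Ω] (P : Measure Ω) [IsProbabilityMeasure P]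
    (X Y : Fin (2 * M) → Ω → ℝ)
    (hXmeas : ∀ i, Measurable (X i)) (hYmeas : ∀ i, Measurable (Y i))
    (lamX lamY : Fin (2 * M) → ℝ)
    (hlamX : ∀ i, 0 < lamX i) (hlamY : ∀ i, i ≠ m → 0 < lamY i)
    (hXdist : ∀ i, Measure.map (X i) P = expMeasure (lamX i))
    (hYdist : ∀ i, i ≠ m → Measure.map (Y i) P = expMeasure (lamY i))
    (hindep : iIndepFun
      (Sum.elim X fun j : {i : Fin (2 * M) // i ≠ m} => Y j.1) P) :
    Tendsto
      (fun ρ : ℝ =>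
        Real.log (∫ ω,
            ((∑ A ∈ (Finset.univ.erase m).powerset.filter Finset.Nonempty,
                gaussQ (Real.sqrt (2 * d₁ * ρ * X m ω + d₂ * ρ / M * ∑ i ∈ A, Y i ω)) *
                  (∏ j ∈ Finset.univ.erase m \ A, gaussQ (Real.sqrt (2 * d₁ * ρ * X j ω))) *
                  (∏ i ∈ A, (1 - gaussQ (Real.sqrt (2 * d₁ * ρ * X i ω))))) +
              ∏ j, gaussQ (Real.sqrt (2 * d₁ * ρ * X j ω))) ∂P) / Real.log ρ)
      atTop (nhds (-(2 * M : ℝ))) := by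
  classical
  have hM0 : (0:ℝ) < (M:ℝ) := by exact_mod_cast hM
  set Z := Sum.elim X fun j : {i : Fin (2 * M) // i ≠ m} => Y j.1 with hZdef
  have hZmeas : ∀ k, Measurable (Z k) := by
    rintro (j | j)
    · exact hXmeas j
    · exact hYmeas j.1
  set rate : (Fin (2 * M) ⊕ {i : Fin (2 * M) // i ≠ m}) → ℝ :=
    Sum.elim lamX fun j => lamY j.1 with hrdef
  have hratepos : ∀ k, 0 < rate k := by
    rintro (j | j)
    · exact hlamX j
    · exact hlamY j.1 j.2
  have hZdist : ∀ k, Measure.map (Z k) P = expMeasure (rate k) := by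
    rintro (j | j)
    · exact hXdist j
    · exact hYdist j.1 j.2
  -- constants
  set S := (Finset.univ.erase m).powerset.filter Finset.Nonempty with hSdef
  set q0 := gaussQ (Real.sqrt (2 * d₁)) with hq0def
  have hq0 : 0 < q0 := gaussQ_pos _
  set c₁ := ∏ j : Fin (2 * M), (q0 * (lamX j * (Real.exp 1)⁻¹)) with hc₁def
  have hc₁ : 0 < c₁ := Finset.prod_pos fun j _ => mul_pos hq0 (mul_pos (hlamX j) (inv_pos.2 (Real.exp_pos 1)))
  set c₂ := (S.card : ℝ) + 1 with hc₂def
  have hc₂ : 0 < c₂ := by rw [hc₂def]; positivity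
  set cmin := min d₁ (d₂ / (2 * (M:ℝ))) with hcmindef
  have hcmin : 0 < cmin := lt_min hd₁ (div_pos hd₂ (by linarith))
  set R := Finset.univ.sup' ⟨m, Finset.mem_univ m⟩ (fun i => max (lamX i) (lamY i)) with hRdef
  have hRX : ∀ i, lamX i ≤ R := fun i =>
    le_trans (le_max_left _ _)
      (Finset.le_sup' (f := fun i => max (lamX i) (lamY i)) (Finset.mem_univ i))
  have hRY : ∀ i, lamY i ≤ R := fun i =>
    le_trans (le_max_right _ _)
      (Finset.le_sup' (f := fun i => max (lamX i) (lamY i)) (Finset.mem_univ i))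
  have hR0 : 0 < R := lt_of_lt_of_le (hlamX m) (hRX m)
  set K := 2 * R / cmin + 1 with hKdef
  have hK : 0 < K := by positivity
  -- per-ρ measurability of building blocks
  have hQXm : ∀ (ρ : ℝ) (j : Fin (2 * M)),
      Measurable (fun ω => gaussQ (Real.sqrt (2 * d₁ * ρ * X j ω))) := fun ρ j =>
    gaussQ_measurable.comp (Real.continuous_sqrt.measurable.comp
      (measurable_const.mul (hXmeas j)))
  have hBIGmeas : ∀ ρ : ℝ, Measurable (fun ω =>
      (∑ A ∈ S,
          gaussQ (Real.sqrt (2 * d₁ * ρ * X m ω + d₂ * ρ / M * ∑ i ∈ A, Y i ω)) *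
            (∏ j ∈ Finset.univ.erase m \ A, gaussQ (Real.sqrt (2 * d₁ * ρ * X j ω))) *
            (∏ i ∈ A, (1 - gaussQ (Real.sqrt (2 * d₁ * ρ * X i ω))))) +
        ∏ j, gaussQ (Real.sqrt (2 * d₁ * ρ * X j ω))) := by
    intro ρ
    apply Measurable.add
    · apply Finset.measurable_sum
      intro A _
      apply Measurable.mul
      apply Measurable.mul
      · exact gaussQ_measurable.comp (Real.continuous_sqrt.measurable.comp
          ((measurable_const.mul (hXmeas m)).add
            (measurable_const.mul (Finset.measurable_sum A fun i _ => hYmeas i))))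
      · exact Finset.measurable_prod _ fun j _ => hQXm ρ j
      · exact Finset.measurable_prod _ fun i _ => measurable_const.sub (hQXm ρ i)
    · exact Finset.measurable_prod _ fun j _ => hQXm ρ j
  -- bounds on the integrand
  have hterm01 : ∀ (ρ : ℝ) (ω : Ω) (A : Finset (Fin (2 * M))),
      0 ≤ gaussQ (Real.sqrt (2 * d₁ * ρ * X m ω + d₂ * ρ / M * ∑ i ∈ A, Y i ω)) *
          (∏ j ∈ Finset.univ.erase m \ A, gaussQ (Real.sqrt (2 * d₁ * ρ * X j ω))) *
          (∏ i ∈ A, (1 - gaussQ (Real.sqrt (2 * d₁ * ρ * X i ω)))) ∧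
      gaussQ (Real.sqrt (2 * d₁ * ρ * X m ω + d₂ * ρ / M * ∑ i ∈ A, Y i ω)) *
          (∏ j ∈ Finset.univ.erase m \ A, gaussQ (Real.sqrt (2 * d₁ * ρ * X j ω))) *
          (∏ i ∈ A, (1 - gaussQ (Real.sqrt (2 * d₁ * ρ * X i ω)))) ≤ 1 := by
    intro ρ ω A
    have h1 := gaussQ_nonneg (Real.sqrt (2 * d₁ * ρ * X m ω + d₂ * ρ / M * ∑ i ∈ A, Y i ω))
    have h2 := gaussQ_le_one (Real.sqrt (2 * d₁ * ρ * X m ω + d₂ * ρ / M * ∑ i ∈ A, Y i ω))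
    have hB0 : 0 ≤ ∏ j ∈ Finset.univ.erase m \ A, gaussQ (Real.sqrt (2 * d₁ * ρ * X j ω)) :=
      Finset.prod_nonneg fun j _ => gaussQ_nonneg _
    have hB1 : ∏ j ∈ Finset.univ.erase m \ A, gaussQ (Real.sqrt (2 * d₁ * ρ * X j ω)) ≤ 1 :=
      Finset.prod_le_one (fun j _ => gaussQ_nonneg _) (fun j _ => gaussQ_le_one _)
    have hC0 : 0 ≤ ∏ i ∈ A, (1 - gaussQ (Real.sqrt (2 * d₁ * ρ * X i ω))) :=
      Finset.prod_nonneg fun i _ => sub_nonneg.2 (gaussQ_le_one _)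
    have hC1 : ∏ i ∈ A, (1 - gaussQ (Real.sqrt (2 * d₁ * ρ * X i ω))) ≤ 1 :=
      Finset.prod_le_one (fun i _ => sub_nonneg.2 (gaussQ_le_one _))
        (fun i _ => by linarith [gaussQ_nonneg (Real.sqrt (2 * d₁ * ρ * X i ω))])
    constructor
    · exact mul_nonneg (mul_nonneg h1 hB0) hC0
    · calc gaussQ (Real.sqrt (2 * d₁ * ρ * X m ω + d₂ * ρ / M * ∑ i ∈ A, Y i ω)) *
          (∏ j ∈ Finset.univ.erase m \ A, gaussQ (Real.sqrt (2 * d₁ * ρ * X j ω))) *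
          (∏ i ∈ A, (1 - gaussQ (Real.sqrt (2 * d₁ * ρ * X i ω))))
          ≤ 1 * 1 * 1 :=
            mul_le_mul (mul_le_mul h2 hB1 hB0 (by norm_num)) hC1 hC0 (by norm_num)
        _ = 1 := by norm_num
  have hBIG0 : ∀ (ρ : ℝ) (ω : Ω), 0 ≤
      (∑ A ∈ S,
          gaussQ (Real.sqrt (2 * d₁ * ρ * X m ω + d₂ * ρ / M * ∑ i ∈ A, Y i ω)) *
            (∏ j ∈ Finset.univ.erase m \ A, gaussQ (Real.sqrt (2 * d₁ * ρ * X j ω))) *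
            (∏ i ∈ A, (1 - gaussQ (Real.sqrt (2 * d₁ * ρ * X i ω))))) +
        ∏ j, gaussQ (Real.sqrt (2 * d₁ * ρ * X j ω)) := fun ρ ω =>
    add_nonneg (Finset.sum_nonneg fun A _ => (hterm01 ρ ω A).1)
      (Finset.prod_nonneg fun j _ => gaussQ_nonneg _)
  have hBIGle : ∀ (ρ : ℝ) (ω : Ω),
      (∑ A ∈ S,
          gaussQ (Real.sqrt (2 * d₁ * ρ * X m ω + d₂ * ρ / M * ∑ i ∈ A, Y i ω)) *
            (∏ j ∈ Finset.univ.erase m \ A, gaussQ (Real.sqrt (2 * d₁ * ρ * X j ω))) *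
            (∏ i ∈ A, (1 - gaussQ (Real.sqrt (2 * d₁ * ρ * X i ω))))) +
        ∏ j, gaussQ (Real.sqrt (2 * d₁ * ρ * X j ω)) ≤ c₂ := by
    intro ρ ω
    rw [hc₂def]
    have h1 : ∑ A ∈ S,
        gaussQ (Real.sqrt (2 * d₁ * ρ * X m ω + d₂ * ρ / M * ∑ i ∈ A, Y i ω)) *
          (∏ j ∈ Finset.univ.erase m \ A, gaussQ (Real.sqrt (2 * d₁ * ρ * X j ω))) *
          (∏ i ∈ A, (1 - gaussQ (Real.sqrt (2 * d₁ * ρ * X i ω)))) ≤ S.card • (1:ℝ) :=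
      Finset.sum_le_card_nsmul _ _ _ fun A _ => (hterm01 ρ ω A).2
    rw [nsmul_eq_mul, mul_one] at h1
    have h2 : ∏ j, gaussQ (Real.sqrt (2 * d₁ * ρ * X j ω)) ≤ 1 :=
      Finset.prod_le_one (fun j _ => gaussQ_nonneg _) (fun j _ => gaussQ_le_one _)
    linarith
  have hBIGint : ∀ ρ : ℝ, Integrable (fun ω =>
      (∑ A ∈ S,
          gaussQ (Real.sqrt (2 * d₁ * ρ * X m ω + d₂ * ρ / M * ∑ i ∈ A, Y i ω)) *
            (∏ j ∈ Finset.univ.erase m \ A, gaussQ (Real.sqrt (2 * d₁ * ρ * X j ω))) *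
            (∏ i ∈ A, (1 - gaussQ (Real.sqrt (2 * d₁ * ρ * X i ω))))) +
        ∏ j, gaussQ (Real.sqrt (2 * d₁ * ρ * X j ω))) P := fun ρ =>
    int_of_bd (hBIGmeas ρ).aestronglyMeasurable (C := c₂)
      (fun ω => abs_le.2 ⟨by linarith [hBIG0 ρ ω, hc₂], hBIGle ρ ω⟩)
  -- lower bound
  have hlow : ∀ᶠ ρ in atTop, c₁ * (ρ⁻¹) ^ (2 * M) ≤ ∫ ω,
      ((∑ A ∈ S,
          gaussQ (Real.sqrt (2 * d₁ * ρ * X m ω + d₂ * ρ / M * ∑ i ∈ A, Y i ω)) *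
            (∏ j ∈ Finset.univ.erase m \ A, gaussQ (Real.sqrt (2 * d₁ * ρ * X j ω))) *
            (∏ i ∈ A, (1 - gaussQ (Real.sqrt (2 * d₁ * ρ * X i ω))))) +
        ∏ j, gaussQ (Real.sqrt (2 * d₁ * ρ * X j ω))) ∂P := by
    filter_upwards [eventually_ge_atTop (Real.exp 1), eventually_ge_atTop (R + 1)]
      with ρ hρe hρR
    have hρ1 : (1:ℝ) < ρ := lt_of_lt_of_le (by nlinarith [Real.exp_one_gt_d9]) hρe
    have hρ0 : (0:ℝ) < ρ := lt_trans one_pos hρ1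
    have hρlam : ∀ j, lamX j ≤ ρ := fun j => le_trans (hRX j) (by linarith)
    -- the measurable bounded factor
    have hgm : Measurable (fun x : ℝ => gaussQ (Real.sqrt (2 * d₁ * ρ * x))) :=
      gaussQ_measurable.comp (Real.continuous_sqrt.measurable.comp
        (measurable_id.const_mul (2 * d₁ * ρ)))
    have hgb : ∀ x : ℝ, |gaussQ (Real.sqrt (2 * d₁ * ρ * x))| ≤ 1 := fun x =>
      abs_le.2 ⟨by linarith [gaussQ_nonneg (Real.sqrt (2 * d₁ * ρ * x))], gaussQ_le_one _⟩
    -- step 1 : drop the sum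
    have h1 : ∫ ω, ∏ j, gaussQ (Real.sqrt (2 * d₁ * ρ * X j ω)) ∂P ≤ ∫ ω,
        ((∑ A ∈ S,
            gaussQ (Real.sqrt (2 * d₁ * ρ * X m ω + d₂ * ρ / M * ∑ i ∈ A, Y i ω)) *
              (∏ j ∈ Finset.univ.erase m \ A, gaussQ (Real.sqrt (2 * d₁ * ρ * X j ω))) *
              (∏ i ∈ A, (1 - gaussQ (Real.sqrt (2 * d₁ * ρ * X i ω))))) +
          ∏ j, gaussQ (Real.sqrt (2 * d₁ * ρ * X j ω))) ∂P := by
      apply integral_mono _ (hBIGint ρ)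
      · intro ω
        exact le_add_of_nonneg_left (Finset.sum_nonneg fun A _ => (hterm01 ρ ω A).1)
      · apply int_of_bd (Finset.measurable_prod _ fun j _ => hQXm ρ j).aestronglyMeasurable
          (C := 1)
        intro ω
        rw [Finset.abs_prod]
        exact Finset.prod_le_one (fun j _ => abs_nonneg _)
          (fun j _ => abs_le.2
            ⟨by linarith [gaussQ_nonneg (Real.sqrt (2 * d₁ * ρ * X j ω))], gaussQ_le_one _⟩)
    -- step 2 : factorize
    have h2 : ∫ ω, ∏ j, gaussQ (Real.sqrt (2 * d₁ * ρ * X j ω)) ∂P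
        = ∏ j, ∫ ω, gaussQ (Real.sqrt (2 * d₁ * ρ * X j ω)) ∂P := by
      have hfac := indep_integral_prod hindep hZmeas
        (Sum.elim (fun _ x => gaussQ (Real.sqrt (2 * d₁ * ρ * x)))
          (fun _ _ => (1:ℝ)))
        (by rintro (j | j)
            · exact hgm
            · exact measurable_const)
        (by rintro (j | j) x
            · exact hgb x
            · simp)
        (Finset.univ.map ⟨Sum.inl, Sum.inl_injective⟩)
      simp only [Finset.prod_map, Function.Embedding.coeFn_mk, hZdef, Sum.elim_inl] at hfac
      exact hfac
    -- step 3 : per-factor lower bound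
    have h3 : ∀ j : Fin (2 * M), q0 * (lamX j * (Real.exp 1)⁻¹) * ρ⁻¹ ≤
        ∫ ω, gaussQ (Real.sqrt (2 * d₁ * ρ * X j ω)) ∂P := by
      intro j
      have hmap : ∫ ω, gaussQ (Real.sqrt (2 * d₁ * ρ * X j ω)) ∂P
          = ∫ x, gaussQ (Real.sqrt (2 * d₁ * ρ * x)) ∂(expMeasure (lamX j)) := by
        rw [← hXdist j]
        exact (integral_map (hXmeas j).aemeasurable hgm.aestronglyMeasurable).symm
      rw [hmap]
      have hql : ∀ x ∈ Set.Ioc (0:ℝ) ρ⁻¹, q0 ≤ gaussQ (Real.sqrt (2 * d₁ * ρ * x)) := by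
        intro x hx
        rw [hq0def]
        apply gaussQ_antitone
        apply Real.sqrt_le_sqrt
        have : ρ * x ≤ 1 := by
          have := mul_le_mul_of_nonneg_left hx.2 hρ0.le
          rwa [mul_inv_cancel₀ hρ0.ne'] at this
        nlinarith
      have hlb := exp_factor_lower (hlamX j) hgm
        (fun x => gaussQ_nonneg _) (fun x => gaussQ_le_one _)
        hq0.le (inv_pos.2 hρ0) hql
      refine le_trans ?_ hlb
      -- q0 * (lamX j * e⁻¹) * ρ⁻¹ ≤ q0 * (1 - exp(-(lamX j * ρ⁻¹)))
      have hu0 : 0 < lamX j * ρ⁻¹ := mul_pos (hlamX j) (inv_pos.2 hρ0)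
      have hu1 : lamX j * ρ⁻¹ ≤ 1 := by
        rw [← div_eq_mul_inv]
        exact div_le_one_of_le₀ (hρlam j) hρ0.le
      have key : lamX j * ρ⁻¹ * (Real.exp 1)⁻¹ ≤ 1 - Real.exp (-(lamX j * ρ⁻¹)) := by
        set u := lamX j * ρ⁻¹ with hu
        have h1' : Real.exp (-u) * (u + 1) ≤ 1 := by
          have := mul_le_mul_of_nonneg_left (Real.add_one_le_exp u) (Real.exp_pos (-u)).le
          rwa [← Real.exp_add, neg_add_cancel, Real.exp_zero] at this
        have h2' : Real.exp (-(1:ℝ)) ≤ Real.exp (-u) := Real.exp_le_exp.2 (by linarith)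
        have h4 : u * Real.exp (-(1:ℝ)) ≤ u * Real.exp (-u) :=
          mul_le_mul_of_nonneg_left h2' hu0.le
        rw [Real.exp_neg 1] at h4
        nlinarith
      calc q0 * (lamX j * (Real.exp 1)⁻¹) * ρ⁻¹
          = q0 * (lamX j * ρ⁻¹ * (Real.exp 1)⁻¹) := by ring
        _ ≤ q0 * (1 - Real.exp (-(lamX j * ρ⁻¹))) :=
            mul_le_mul_of_nonneg_left key hq0.le
    -- combine
    have h4 : c₁ * (ρ⁻¹) ^ (2 * M) ≤ ∏ j, ∫ ω, gaussQ (Real.sqrt (2 * d₁ * ρ * X j ω)) ∂P := by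
      have := Finset.prod_le_prod (s := Finset.univ)
        (f := fun j : Fin (2 * M) => q0 * (lamX j * (Real.exp 1)⁻¹) * ρ⁻¹)
        (g := fun j => ∫ ω, gaussQ (Real.sqrt (2 * d₁ * ρ * X j ω)) ∂P)
        (fun j _ => mul_nonneg (mul_nonneg hq0.le (mul_nonneg (hlamX j).le (by positivity)))
          (by positivity))
        (fun j _ => h3 j)
      refine le_trans (le_of_eq ?_) this
      rw [Finset.prod_mul_distrib, Finset.prod_const, Finset.card_univ, Fintype.card_fin,
        hc₁def]
    calc c₁ * (ρ⁻¹) ^ (2 * M) ≤ _ := h4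
      _ = ∫ ω, ∏ j, gaussQ (Real.sqrt (2 * d₁ * ρ * X j ω)) ∂P := h2.symm
      _ ≤ _ := h1

  -- upper bound
  have hup : ∀ᶠ ρ in atTop, (∫ ω,
      ((∑ A ∈ S,
          gaussQ (Real.sqrt (2 * d₁ * ρ * X m ω + d₂ * ρ / M * ∑ i ∈ A, Y i ω)) *
            (∏ j ∈ Finset.univ.erase m \ A, gaussQ (Real.sqrt (2 * d₁ * ρ * X j ω))) *
            (∏ i ∈ A, (1 - gaussQ (Real.sqrt (2 * d₁ * ρ * X i ω))))) +
        ∏ j, gaussQ (Real.sqrt (2 * d₁ * ρ * X j ω))) ∂P)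
      ≤ c₂ * (K * Real.log ρ / ρ) ^ (2 * M) := by
    filter_upwards [eventually_ge_atTop (Real.exp 1), eventually_ge_atTop (R + 1)]
      with ρ hρe hρR
    have hρ1 : (1:ℝ) < ρ := lt_of_lt_of_le (by nlinarith [Real.exp_one_gt_d9]) hρe
    have hρ0 : (0:ℝ) < ρ := lt_trans one_pos hρ1
    have hL1 : 1 ≤ Real.log ρ := by
      rw [Real.le_log_iff_exp_le hρ0]; simpa using hρe
    have hL0 : 0 < Real.log ρ := lt_of_lt_of_le one_pos hL1
    have hM' : (M:ℝ) ≠ 0 := ne_of_gt hM0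
    set b := 2 * Real.log ρ / (cmin * ρ) with hbdef
    have hb0 : 0 ≤ b := by
      rw [hbdef]
      exact div_nonneg (by linarith) (mul_pos hcmin hρ0).le
    set U := K * Real.log ρ / ρ with hUdef
    have hU0 : 0 ≤ U := by
      rw [hUdef]
      exact div_nonneg (mul_nonneg hK.le (by linarith)) hρ0.le
    -- the dominating single-variable functions
    set F : (Fin (2 * M) ⊕ {i : Fin (2 * M) // i ≠ m}) → ℝ → ℝ :=
      Sum.elim (fun _ x => Real.exp (-(d₁ * ρ * max x 0)))
        (fun _ x => Real.exp (-(d₂ * ρ / (2 * (M:ℝ)) * max x 0))) with hFdef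
    have hFmeas : ∀ k, Measurable (F k) := by
      rintro (j | j)
      · rw [hFdef]; simp only [Sum.elim_inl]; exact meas_exp_neg_mul_max _
      · rw [hFdef]; simp only [Sum.elim_inr]; exact meas_exp_neg_mul_max _
    have hF0 : ∀ k x, 0 ≤ F k x := by
      rintro (j | j) x
      · rw [hFdef]; simp only [Sum.elim_inl]; exact (Real.exp_pos _).le
      · rw [hFdef]; simp only [Sum.elim_inr]; exact (Real.exp_pos _).le
    have hFbd : ∀ k x, |F k x| ≤ 1 := by
      have hcY : (0:ℝ) ≤ d₂ * ρ / (2 * (M:ℝ)) := by positivity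
      rintro (j | j) x
      · rw [hFdef]; simp only [Sum.elim_inl]
        exact abs_le.2 ⟨by linarith [Real.exp_pos (-(d₁ * ρ * max x 0))],
          exp_neg_mul_max_le_one (by positivity)⟩
      · rw [hFdef]; simp only [Sum.elim_inr]
        exact abs_le.2 ⟨by linarith [Real.exp_pos (-(d₂ * ρ / (2 * (M:ℝ)) * max x 0))],
          exp_neg_mul_max_le_one hcY⟩
    -- the arithmetic estimate for a single factor
    have harith : ∀ r c : ℝ, 0 < r → r ≤ R → cmin * ρ ≤ c →
        r * b + Real.exp (-(c * b)) ≤ U := by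
      intro r c hr hrR hc
      have hbb : cmin * ρ * b = 2 * Real.log ρ := by
        rw [hbdef]; field_simp
      have hcb : 2 * Real.log ρ ≤ c * b := by
        rw [← hbb]; exact mul_le_mul_of_nonneg_right hc hb0
      have hexp : Real.exp (-(c * b)) ≤ Real.log ρ / ρ := by
        have h1 : Real.exp (-(c * b)) ≤ Real.exp (-(2 * Real.log ρ)) :=
          Real.exp_le_exp.2 (by linarith)
        have h2 : Real.exp (-(2 * Real.log ρ)) = ρ⁻¹ * ρ⁻¹ := by
          rw [show -(2 * Real.log ρ) = -Real.log ρ + -Real.log ρ by ring, Real.exp_add,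
            Real.exp_neg, Real.exp_log hρ0]
        have hinv1 : ρ⁻¹ ≤ 1 := by
          rw [inv_le_one_iff₀]; right; exact hρ1.le
        have h3 : ρ⁻¹ * ρ⁻¹ ≤ Real.log ρ * ρ⁻¹ :=
          mul_le_mul_of_nonneg_right (le_trans hinv1 hL1) (by positivity)
        rw [div_eq_mul_inv]
        linarith [h1, h2 ▸ h1]
      have e2 : R * b = (2 * R / cmin) * (Real.log ρ / ρ) := by
        rw [hbdef]; field_simp
      have hrb : r * b ≤ (2 * R / cmin) * (Real.log ρ / ρ) :=
        (mul_le_mul_of_nonneg_right hrR hb0).trans_eq e2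
      have hU' : U = (2 * R / cmin) * (Real.log ρ / ρ) + Real.log ρ / ρ := by
        rw [hUdef, hKdef]; ring
      linarith
    -- per-factor integral bound
    have hfack : ∀ k, (∫ ω, F k (Z k ω) ∂P) ≤ U := by
      have hmeq : ∀ k, ∫ ω, F k (Z k ω) ∂P
          = ∫ x, F k x ∂(expMeasure (rate k)) := fun k => by
        rw [← hZdist k]
        exact (integral_map (hZmeas k).aemeasurable (hFmeas k).aestronglyMeasurable).symm
      rintro (j | j)
      · rw [hmeq]
        simp only [hFdef, hrdef, Sum.elim_inl]
        refine le_trans (exp_factor_upper (hlamX j) (mul_pos hd₁ hρ0) hb0)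
          (harith _ _ (hlamX j) (hRX j) ?_)
        rw [hcmindef]
        exact mul_le_mul_of_nonneg_right (min_le_left _ _) hρ0.le
      · rw [hmeq]
        simp only [hFdef, hrdef, Sum.elim_inr]
        refine le_trans (exp_factor_upper (hlamY j.1 j.2)
          (div_pos (mul_pos hd₂ hρ0) (by linarith)) hb0)
          (harith _ _ (hlamY j.1 j.2) (hRY j.1) ?_)
        have : cmin * ρ ≤ (d₂ / (2 * (M:ℝ))) * ρ := by
          rw [hcmindef]
          exact mul_le_mul_of_nonneg_right (min_le_right _ _) hρ0.le
        calc cmin * ρ ≤ (d₂ / (2 * (M:ℝ))) * ρ := this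
          _ = d₂ * ρ / (2 * (M:ℝ)) := by ring
    -- a.e. nonnegativity
    have haeZ : ∀ᵐ ω ∂P, ∀ k, 0 ≤ Z k ω := by
      rw [MeasureTheory.ae_all_iff]
      intro k
      have h0 : P (Z k ⁻¹' Set.Iio 0) = 0 := by
        rw [← Measure.map_apply (hZmeas k) measurableSet_Iio, hZdist k, expMeasure_Iio_zero]
      rw [ae_iff]
      simp only [not_le]; exact h0
    -- the index sets
    set sfin : Finset (Fin (2 * M)) → Finset (Fin (2 * M) ⊕ {i : Fin (2 * M) // i ≠ m}) :=
      fun A => ((insert m ((Finset.univ.erase m) \ A)).map ⟨Sum.inl, Sum.inl_injective⟩)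
        ∪ ((A.subtype (· ≠ m)).map ⟨Sum.inr, Sum.inr_injective⟩) with hsfdef
    have hdisj : ∀ A : Finset (Fin (2 * M)),
        Disjoint ((insert m ((Finset.univ.erase m) \ A)).map ⟨Sum.inl, Sum.inl_injective⟩)
          ((A.subtype (· ≠ m)).map ⟨Sum.inr, Sum.inr_injective⟩) := by
      intro A
      rw [Finset.disjoint_left]
      rintro k hk1 hk2
      rcases Finset.mem_map.1 hk1 with ⟨a, _, rfl⟩
      rcases Finset.mem_map.1 hk2 with ⟨c, _, hc⟩
      simp at hc
    have hmnot : ∀ A : Finset (Fin (2 * M)), m ∉ (Finset.univ.erase m) \ A := by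
      intro A hmm
      exact (Finset.mem_erase.1 (Finset.mem_sdiff.1 hmm).1).1 rfl
    have hcard : ∀ A ∈ S, (sfin A).card = 2 * M := by
      intro A hA
      have hAsub : A ⊆ Finset.univ.erase m :=
        Finset.mem_powerset.1 (Finset.mem_filter.1 (hSdef ▸ hA)).1
      have hAle : A.card ≤ 2 * M - 1 := by
        have h := Finset.card_le_card hAsub
        rwa [Finset.card_erase_of_mem (Finset.mem_univ m), Finset.card_univ,
          Fintype.card_fin] at h
      have hM1 : 1 ≤ 2 * M := by omega
      simp only [hsfdef]
      rw [Finset.card_union_of_disjoint (hdisj A), Finset.card_map, Finset.card_map,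
        Finset.card_insert_of_notMem (hmnot A), Finset.card_sdiff_of_subset hAsub,
        Finset.card_erase_of_mem (Finset.mem_univ m), Finset.card_univ, Fintype.card_fin,
        Finset.card_subtype, Finset.filter_true_of_mem
          (fun i hi => (Finset.mem_erase.1 (hAsub hi)).1)]
      omega
    -- splitting the product over `sfin A`
    have hsplit : ∀ A, A ⊆ Finset.univ.erase m → ∀ ω : Ω, (∏ k ∈ sfin A, F k (Z k ω))
        = (Real.exp (-(d₁ * ρ * max (X m ω) 0)) *
            ∏ j ∈ Finset.univ.erase m \ A, Real.exp (-(d₁ * ρ * max (X j ω) 0))) *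
          ∏ i ∈ A, Real.exp (-(d₂ * ρ / (2 * (M:ℝ)) * max (Y i ω) 0)) := by
      intro A hAsub ω
      simp only [hsfdef]
      rw [Finset.prod_union (hdisj A), Finset.prod_map, Finset.prod_map,
        Finset.prod_insert (hmnot A)]
      simp only [Function.Embedding.coeFn_mk, hFdef, hZdef, Sum.elim_inl, Sum.elim_inr]
      congr 1
      exact Finset.prod_subtype_of_mem
        (fun i => Real.exp (-(d₂ * ρ / (2 * (M:ℝ)) * max (Y i ω) 0)))
        (fun x hx => (Finset.mem_erase.1 (hAsub hx)).1)
    -- pointwise domination on the nonnegativity event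
    have hptw : ∀ ω : Ω, (∀ k, 0 ≤ Z k ω) →
        (∑ A ∈ S,
            gaussQ (Real.sqrt (2 * d₁ * ρ * X m ω + d₂ * ρ / M * ∑ i ∈ A, Y i ω)) *
              (∏ j ∈ Finset.univ.erase m \ A, gaussQ (Real.sqrt (2 * d₁ * ρ * X j ω))) *
              (∏ i ∈ A, (1 - gaussQ (Real.sqrt (2 * d₁ * ρ * X i ω))))) +
          ∏ j, gaussQ (Real.sqrt (2 * d₁ * ρ * X j ω))
        ≤ (∑ A ∈ S, ∏ k ∈ sfin A, F k (Z k ω)) +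
            ∏ k ∈ Finset.univ.map ⟨Sum.inl, Sum.inl_injective⟩, F k (Z k ω) := by
      intro ω h0
      have h0X : ∀ i, 0 ≤ X i ω := fun i => by
        have := h0 (Sum.inl i); rwa [hZdef] at this
      have h0Y : ∀ i, i ≠ m → 0 ≤ Y i ω := fun i hi => by
        have := h0 (Sum.inr ⟨i, hi⟩); rwa [hZdef] at this
      apply add_le_add
      · apply Finset.sum_le_sum
        intro A hA
        have hAsub : A ⊆ Finset.univ.erase m :=
          Finset.mem_powerset.1 (Finset.mem_filter.1 (hSdef ▸ hA)).1
        rw [hsplit A hAsub ω]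
        have hYA : ∀ i ∈ A, 0 ≤ Y i ω := fun i hi =>
          h0Y i (Finset.mem_erase.1 (hAsub hi)).1
        -- bound the leading Q factor
        have hs0 : 0 ≤ 2 * d₁ * ρ * X m ω + d₂ * ρ / M * ∑ i ∈ A, Y i ω :=
          add_nonneg (mul_nonneg (by positivity) (h0X m))
            (mul_nonneg (by positivity) (Finset.sum_nonneg hYA))
        have hq : gaussQ (Real.sqrt (2 * d₁ * ρ * X m ω + d₂ * ρ / M * ∑ i ∈ A, Y i ω))
            ≤ Real.exp (-(d₁ * ρ * max (X m ω) 0)) *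
              ∏ i ∈ A, Real.exp (-(d₂ * ρ / (2 * (M:ℝ)) * max (Y i ω) 0)) := by
          calc gaussQ (Real.sqrt (2 * d₁ * ρ * X m ω + d₂ * ρ / M * ∑ i ∈ A, Y i ω))
              ≤ Real.exp (-Real.sqrt (2 * d₁ * ρ * X m ω + d₂ * ρ / M * ∑ i ∈ A, Y i ω) ^ 2
                  / 2) := gaussQ_le_exp (Real.sqrt_nonneg _)
            _ = Real.exp (-(2 * d₁ * ρ * X m ω + d₂ * ρ / M * ∑ i ∈ A, Y i ω) / 2) := by
                rw [Real.sq_sqrt hs0]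
            _ = Real.exp (-(d₁ * ρ * max (X m ω) 0)) *
                ∏ i ∈ A, Real.exp (-(d₂ * ρ / (2 * (M:ℝ)) * max (Y i ω) 0)) := by
                rw [max_eq_left (h0X m),
                  Finset.prod_congr rfl (fun i hi => by rw [max_eq_left (hYA i hi)]),
                  ← Real.exp_sum, ← Real.exp_add]
                congr 1
                rw [Finset.sum_neg_distrib, ← Finset.mul_sum]
                field_simp
                ring
        have hB : (∏ j ∈ Finset.univ.erase m \ A, gaussQ (Real.sqrt (2 * d₁ * ρ * X j ω)))
            ≤ ∏ j ∈ Finset.univ.erase m \ A, Real.exp (-(d₁ * ρ * max (X j ω) 0)) :=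
          Finset.prod_le_prod (fun j _ => gaussQ_nonneg _)
            (fun j _ => gaussQ_sqrt_mul_le hd₁ hρ0)
        have hC : (∏ i ∈ A, (1 - gaussQ (Real.sqrt (2 * d₁ * ρ * X i ω)))) ≤ 1 :=
          Finset.prod_le_one (fun i _ => sub_nonneg.2 (gaussQ_le_one _))
            (fun i _ => by linarith [gaussQ_nonneg (Real.sqrt (2 * d₁ * ρ * X i ω))])
        have hC0 : 0 ≤ ∏ i ∈ A, (1 - gaussQ (Real.sqrt (2 * d₁ * ρ * X i ω))) :=
          Finset.prod_nonneg fun i _ => sub_nonneg.2 (gaussQ_le_one _)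
        have hB0 : 0 ≤ ∏ j ∈ Finset.univ.erase m \ A,
            gaussQ (Real.sqrt (2 * d₁ * ρ * X j ω)) :=
          Finset.prod_nonneg fun j _ => gaussQ_nonneg _
        have hq0' : 0 ≤ gaussQ (Real.sqrt (2 * d₁ * ρ * X m ω + d₂ * ρ / M * ∑ i ∈ A, Y i ω)) :=
          gaussQ_nonneg _
        have hT1 : 0 ≤ Real.exp (-(d₁ * ρ * max (X m ω) 0)) *
            ∏ i ∈ A, Real.exp (-(d₂ * ρ / (2 * (M:ℝ)) * max (Y i ω) 0)) :=
          mul_nonneg (Real.exp_pos _).le (Finset.prod_nonneg fun i _ => (Real.exp_pos _).le)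
        calc gaussQ (Real.sqrt (2 * d₁ * ρ * X m ω + d₂ * ρ / M * ∑ i ∈ A, Y i ω)) *
              (∏ j ∈ Finset.univ.erase m \ A, gaussQ (Real.sqrt (2 * d₁ * ρ * X j ω))) *
              (∏ i ∈ A, (1 - gaussQ (Real.sqrt (2 * d₁ * ρ * X i ω))))
            ≤ ((Real.exp (-(d₁ * ρ * max (X m ω) 0)) *
                ∏ i ∈ A, Real.exp (-(d₂ * ρ / (2 * (M:ℝ)) * max (Y i ω) 0))) *
                (∏ j ∈ Finset.univ.erase m \ A, Real.exp (-(d₁ * ρ * max (X j ω) 0)))) * 1 := by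
              exact mul_le_mul (mul_le_mul hq hB hB0 hT1) hC hC0
                (mul_nonneg hT1 (Finset.prod_nonneg fun j _ => (Real.exp_pos _).le))
          _ = (Real.exp (-(d₁ * ρ * max (X m ω) 0)) *
                ∏ j ∈ Finset.univ.erase m \ A, Real.exp (-(d₁ * ρ * max (X j ω) 0))) *
              ∏ i ∈ A, Real.exp (-(d₂ * ρ / (2 * (M:ℝ)) * max (Y i ω) 0)) := by ring
      · rw [Finset.prod_map]
        simp only [Function.Embedding.coeFn_mk, hFdef, hZdef, Sum.elim_inl]
        exact Finset.prod_le_prod (fun j _ => gaussQ_nonneg _)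
          (fun j _ => gaussQ_sqrt_mul_le hd₁ hρ0)
    -- integrability of the dominating functions
    have hRHSintA : ∀ s : Finset (Fin (2 * M) ⊕ {i : Fin (2 * M) // i ≠ m}),
        Integrable (fun ω => ∏ k ∈ s, F k (Z k ω)) P := fun s =>
      int_of_bd (Finset.measurable_prod _ fun k _ =>
          (hFmeas k).comp (hZmeas k)).aestronglyMeasurable (C := 1)
        (fun ω => by
          rw [Finset.abs_prod]
          exact Finset.prod_le_one (fun k _ => abs_nonneg _) (fun k _ => hFbd k _))
    -- integrate the domination
    have hstep1 : (∫ ω,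
        ((∑ A ∈ S,
            gaussQ (Real.sqrt (2 * d₁ * ρ * X m ω + d₂ * ρ / M * ∑ i ∈ A, Y i ω)) *
              (∏ j ∈ Finset.univ.erase m \ A, gaussQ (Real.sqrt (2 * d₁ * ρ * X j ω))) *
              (∏ i ∈ A, (1 - gaussQ (Real.sqrt (2 * d₁ * ρ * X i ω))))) +
          ∏ j, gaussQ (Real.sqrt (2 * d₁ * ρ * X j ω))) ∂P)
        ≤ ∫ ω, ((∑ A ∈ S, ∏ k ∈ sfin A, F k (Z k ω)) +
            ∏ k ∈ Finset.univ.map ⟨Sum.inl, Sum.inl_injective⟩, F k (Z k ω)) ∂P := by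
      apply integral_mono_ae (hBIGint ρ)
        ((integrable_finset_sum S fun A _ => hRHSintA (sfin A)).add (hRHSintA _))
      exact haeZ.mono hptw
    have hstep2 : (∫ ω, ((∑ A ∈ S, ∏ k ∈ sfin A, F k (Z k ω)) +
          ∏ k ∈ Finset.univ.map ⟨Sum.inl, Sum.inl_injective⟩, F k (Z k ω)) ∂P)
        = (∑ A ∈ S, ∫ ω, ∏ k ∈ sfin A, F k (Z k ω) ∂P) +
          ∫ ω, ∏ k ∈ Finset.univ.map ⟨Sum.inl, Sum.inl_injective⟩, F k (Z k ω) ∂P := by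
      rw [integral_add (integrable_finset_sum S fun A _ => hRHSintA (sfin A)) (hRHSintA _),
        integral_finset_sum S fun A _ => hRHSintA (sfin A)]
    have hstep3 : ∀ A ∈ S, (∫ ω, ∏ k ∈ sfin A, F k (Z k ω) ∂P) ≤ U ^ (2 * M) := by
      intro A hA
      rw [indep_integral_prod hindep hZmeas F hFmeas hFbd (sfin A)]
      calc ∏ k ∈ sfin A, ∫ ω, F k (Z k ω) ∂P ≤ ∏ _k ∈ sfin A, U :=
          Finset.prod_le_prod (fun k _ => integral_nonneg fun ω => hF0 k _)
            (fun k _ => hfack k)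
        _ = U ^ (2 * M) := by rw [Finset.prod_const, hcard A hA]
    have hstep4 : (∫ ω, ∏ k ∈ Finset.univ.map ⟨Sum.inl, Sum.inl_injective⟩,
        F k (Z k ω) ∂P) ≤ U ^ (2 * M) := by
      rw [indep_integral_prod hindep hZmeas F hFmeas hFbd]
      calc ∏ k ∈ Finset.univ.map ⟨Sum.inl, Sum.inl_injective⟩, ∫ ω, F k (Z k ω) ∂P
          ≤ ∏ _k ∈ Finset.univ.map (⟨Sum.inl, Sum.inl_injective⟩ :
              Fin (2 * M) ↪ Fin (2 * M) ⊕ {i : Fin (2 * M) // i ≠ m}), U :=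
          Finset.prod_le_prod (fun k _ => integral_nonneg fun ω => hF0 k _)
            (fun k _ => hfack k)
        _ = U ^ (2 * M) := by
            rw [Finset.prod_const, Finset.card_map, Finset.card_univ, Fintype.card_fin]
    calc (∫ ω,
        ((∑ A ∈ S,
            gaussQ (Real.sqrt (2 * d₁ * ρ * X m ω + d₂ * ρ / M * ∑ i ∈ A, Y i ω)) *
              (∏ j ∈ Finset.univ.erase m \ A, gaussQ (Real.sqrt (2 * d₁ * ρ * X j ω))) *
              (∏ i ∈ A, (1 - gaussQ (Real.sqrt (2 * d₁ * ρ * X i ω))))) +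
          ∏ j, gaussQ (Real.sqrt (2 * d₁ * ρ * X j ω))) ∂P)
        ≤ (∑ A ∈ S, ∫ ω, ∏ k ∈ sfin A, F k (Z k ω) ∂P) +
          ∫ ω, ∏ k ∈ Finset.univ.map ⟨Sum.inl, Sum.inl_injective⟩, F k (Z k ω) ∂P :=
          hstep1.trans_eq hstep2
      _ ≤ (∑ _A ∈ S, U ^ (2 * M)) + U ^ (2 * M) :=
          add_le_add (Finset.sum_le_sum hstep3) hstep4
      _ = c₂ * U ^ (2 * M) := by
          rw [Finset.sum_const, nsmul_eq_mul, hc₂def]; ring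

  have hfin := squeeze_log (n := 2 * M) hc₁ hc₂ hK hlow hup
  rw [show (-(2 * (M:ℝ))) = -((2 * M : ℕ) : ℝ) by push_cast; ring]
  exact hfin
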